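/- Let μ = (a,b,ε₀,ε₁,ε₂) with a ∈ (−2,0) and b ∈ (0,2), set η = √(b/(2−b)) and σ(μ) = (a, 2−b, −η³ε₀, ηε₁, −ε₂/η). Then Φ(σ(μ)) = (−η³ε₀, −ε₋(μ)/η, −ε₊(μ)/η, c₋(μ), c₊(μ)); that is, componentwise: the first component of Φ(σ(μ)) equals −η³ε₀, ε₊(σ(μ)) = −ε₋(μ)/η, ε₋(σ(μ)) = −ε₊(μ)/η, c₊(σ(μ)) = c₋(μ), and c₋(σ(μ)) = c₊(μ). -/

import Mathlib

/-!
Replacing `b` by `2 - b` divides the radicand `b(a+2)/(a(b−2))` of `Φ` by `η⁴ = (b/(2−b))²`,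
so the square root in `ε_±(σ(μ))` is that of `ε_±(μ)` divided by `η²`; the rescalings of
`ε₁` and `ε₂` by `η` and `−1/η` then swap `ε₊` and `ε₋` up to the factor `−1/η`.
-/

open Set

/-- The change of parameters `Φ(a,b,ε₀,ε₁,ε₂) = (ε₀, ε₊, ε₋, c₊, c₋)`, where
`ε_± = −ε₂ ∓ 2√(b(a+2)/(a(b−2)))·ε₁` and `c_± = (a+1) ± (1−b)`. -/
noncomputable def Phi (μ : ℝ × ℝ × ℝ × ℝ × ℝ) : ℝ × ℝ × ℝ × ℝ × ℝ :=
  (μ.2.2.1,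
   -μ.2.2.2.2 - 2 * Real.sqrt (μ.2.1 * (μ.1 + 2) / (μ.1 * (μ.2.1 - 2))) * μ.2.2.2.1,
   -μ.2.2.2.2 + 2 * Real.sqrt (μ.2.1 * (μ.1 + 2) / (μ.1 * (μ.2.1 - 2))) * μ.2.2.2.1,
   (μ.1 + 1) + (1 - μ.2.1),
   (μ.1 + 1) - (1 - μ.2.1))

lemma radicand_eq_radicand_sigma_mul_sq (a : ℝ) {b : ℝ} (hb₀ : b ≠ 0) (hb₂ : b ≠ 2) :
    b * (a + 2) / (a * (b - 2)) =
      (2 - b) * (a + 2) / (a * (2 - b - 2)) * (b / (2 - b)) ^ 2 := by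
  have : 2 - b ≠ 0 := sub_ne_zero.2 hb₂.symm
  have : b - 2 ≠ 0 := sub_ne_zero.2 hb₂
  rw [show (2 : ℝ) - b - 2 = -b by ring]
  field_simp
  ring

theorem stmt_18_general (a b e0 e1 e2 : ℝ) (hb : b ∈ Ioo (0 : ℝ) 2) :
    let η := Real.sqrt (b / (2 - b))
    Phi (a, 2 - b, -η ^ 3 * e0, η * e1, -e2 / η) =
      (-η ^ 3 * e0,
       -(-e2 + 2 * Real.sqrt (b * (a + 2) / (a * (b - 2))) * e1) / η,
       -(-e2 - 2 * Real.sqrt (b * (a + 2) / (a * (b - 2))) * e1) / η,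
       (a + 1) - (1 - b),
       (a + 1) + (1 - b)) := by
  intro η
  have ht : 0 < b / (2 - b) := div_pos hb.1 (sub_pos.2 hb.2)
  have hη : 0 < η := Real.sqrt_pos.2 ht
  have hη_sq : η ^ 2 = b / (2 - b) := Real.sq_sqrt ht.le
  have hsqrt : Real.sqrt (b * (a + 2) / (a * (b - 2))) =
      Real.sqrt ((2 - b) * (a + 2) / (a * (2 - b - 2))) * η ^ 2 := by
    rw [radicand_eq_radicand_sigma_mul_sq a hb.1.ne' hb.2.ne, Real.sqrt_mul' _ (sq_nonneg _),
      Real.sqrt_sq ht.le, hη_sq]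
  simp only [Phi, Prod.mk.injEq, hsqrt]
  refine ⟨trivial, ?_, ?_, by ring, by ring⟩ <;> field_simp <;> ring

/-- for `μ = (a,b,ε₀,ε₁,ε₂)` with `a ∈ (−2,0)`, `b ∈ (0,2)`,
`η = √(b/(2−b))` and `σ(μ) = (a, 2−b, −η³ε₀, ηε₁, −ε₂/η)`, one has
`Φ(σ(μ)) = (−η³ε₀, −ε₋(μ)/η, −ε₊(μ)/η, c₋(μ), c₊(μ))`. -/
theorem stmt_18 (a b e0 e1 e2 : ℝ) (ha : a ∈ Ioo (-2 : ℝ) 0) (hb : b ∈ Ioo (0 : ℝ) 2) :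
    let η := Real.sqrt (b / (2 - b))
    Phi (a, 2 - b, -η ^ 3 * e0, η * e1, -e2 / η) =
      (-η ^ 3 * e0,
       -(-e2 + 2 * Real.sqrt (b * (a + 2) / (a * (b - 2))) * e1) / η,
       -(-e2 - 2 * Real.sqrt (b * (a + 2) / (a * (b - 2))) * e1) / η,
       (a + 1) - (1 - b),
       (a + 1) + (1 - b)) :=
  stmt_18_general a b e0 e1 e2 hb
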